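/- Let M ≥ 1 and h ≥ 1 be integers, ρ̲ₛ, ρ̄ₛ ∈ [0,1] for each mode s, and γ : (Fin M)^h → ℝ arbitrary coefficients with γ'_z = max_{q ∈ 𝓜^{h,z}} γ_q for z ∈ Z_h. For every ρ in the LP1 feasible set F_h, the function ρ' : Z_h → [0,1] defined by ρ'_z = Σ_{q ∈ 𝓜^{h,z}} ρ_q belongs to the LP2 feasible set F'_h and satisfies Σ_{q ∈ (Fin M)^h} γ_q · ρ_q ≤ Σ_{z ∈ Z_h} γ'_z · ρ'_z. -/
import Mathlib


noncomputable section

/-- `modeCount M h s q` is `c_s(q)`: the number of indices `j` with `q j = s`. -/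
def modeCount (M h : ℕ) (s : Fin M) (q : Fin h → Fin M) : ℕ :=
  (Finset.univ.filter fun j : Fin h => q j = s).card

/-- The LP1 feasible set `F_h`. -/
def FeasLP1 (M h : ℕ) (ρlo ρhi : Fin M → ℝ) (ρ : (Fin h → Fin M) → ℝ) : Prop :=
  (∀ q, ρ q ∈ Set.Icc (0 : ℝ) 1) ∧ (∑ q : Fin h → Fin M, ρ q = 1) ∧
  ∀ s : Fin M,
    ρlo s ≤ (∑ q : Fin h → Fin M, ((modeCount M h s q : ℝ) / (h : ℝ)) * ρ q) ∧
    (∑ q : Fin h → Fin M, ((modeCount M h s q : ℝ) / (h : ℝ)) * ρ q) ≤ ρhi s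

/-- `Z_h`: the finite set of `M`-tuples `z` of nonnegative integers with `Σ_s z_s = h`. -/
def Zset (M h : ℕ) : Finset (Fin M → ℕ) := Finset.Nat.antidiagonalTuple M h

/-- The LP2 feasible set `F'_h`. -/
def FeasLP2 (M h : ℕ) (ρlo ρhi : Fin M → ℝ) (ρ' : (Fin M → ℕ) → ℝ) : Prop :=
  (∀ z ∈ Zset M h, ρ' z ∈ Set.Icc (0 : ℝ) 1) ∧ (∑ z ∈ Zset M h, ρ' z = 1) ∧
  ∀ s : Fin M,
    ρlo s ≤ (∑ z ∈ Zset M h, ((z s : ℝ) / (h : ℝ)) * ρ' z) ∧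
    (∑ z ∈ Zset M h, ((z s : ℝ) / (h : ℝ)) * ρ' z) ≤ ρhi s

/-- `γ'_z = max_{q ∈ 𝓜^{h,z}} γ_q`, where `𝓜^{h,z} = {q : c_s(q) = z_s for all s}`. -/
def gammaMax (M h : ℕ) (γ : (Fin h → Fin M) → ℝ) (z : Fin M → ℕ) : ℝ :=
  sSup (γ '' {q : Fin h → Fin M | ∀ s : Fin M, modeCount M h s q = z s})

lemma countVec_mem (M h : ℕ) (q : Fin h → Fin M) :
    (fun s => modeCount M h s q) ∈ Zset M h := by
  simp only [Zset, Finset.Nat.mem_antidiagonalTuple]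
  have := Finset.card_eq_sum_card_fiberwise
    (f := q) (s := (Finset.univ : Finset (Fin h))) (t := Finset.univ)
    (fun x _ => Finset.mem_univ _)
  simp only [Finset.card_univ, Fintype.card_fin] at this
  simp [modeCount, ← this]

lemma fiber_sum (M h : ℕ) (f : (Fin h → Fin M) → ℝ) :
    ∑ z ∈ Zset M h, ∑ q ∈ Finset.univ.filter
      (fun q : Fin h → Fin M => ∀ s : Fin M, modeCount M h s q = z s), f q
    = ∑ q : Fin h → Fin M, f q := by
  rw [← Finset.sum_fiberwise_of_maps_to (g := fun q => fun s => modeCount M h s q)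
      (fun q _ => countVec_mem M h q) f]
  refine Finset.sum_congr rfl fun z _ => ?_
  apply Finset.sum_congr
  · ext q; simp [funext_iff]
  · intros; rfl

/-- **First half of the proof of Lemma 4 of the paper.**  For every `ρ ∈ F_h`, the
function `ρ'_z = Σ_{q ∈ 𝓜^{h,z}} ρ_q` belongs to `F'_h` and satisfies
`Σ_q γ_q·ρ_q ≤ Σ_z γ'_z·ρ'_z`. -/
theorem stmt_6 (M h : ℕ) (hM : 1 ≤ M) (hh : 1 ≤ h)
    (ρlo ρhi : Fin M → ℝ)
    (hlo01 : ∀ s, ρlo s ∈ Set.Icc (0 : ℝ) 1) (hhi01 : ∀ s, ρhi s ∈ Set.Icc (0 : ℝ) 1)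
    (γ : (Fin h → Fin M) → ℝ)
    (ρ : (Fin h → Fin M) → ℝ) (hρ : FeasLP1 M h ρlo ρhi ρ) :
    FeasLP2 M h ρlo ρhi
        (fun z => ∑ q ∈ Finset.univ.filter
          (fun q : Fin h → Fin M => ∀ s : Fin M, modeCount M h s q = z s), ρ q) ∧
    (∑ q : Fin h → Fin M, γ q * ρ q) ≤
      ∑ z ∈ Zset M h, gammaMax M h γ z *
        (∑ q ∈ Finset.univ.filter
          (fun q : Fin h → Fin M => ∀ s : Fin M, modeCount M h s q = z s), ρ q) := by
  obtain ⟨h01, hsum, hcons⟩ := hρ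
  have key : ∀ s : Fin M, (∑ z ∈ Zset M h, ((z s : ℝ) / (h : ℝ)) *
      (∑ q ∈ Finset.univ.filter
        (fun q : Fin h → Fin M => ∀ s : Fin M, modeCount M h s q = z s), ρ q))
      = ∑ q : Fin h → Fin M, ((modeCount M h s q : ℝ) / (h : ℝ)) * ρ q := by
    intro s
    rw [← fiber_sum M h (fun q => ((modeCount M h s q : ℝ) / (h : ℝ)) * ρ q)]
    refine Finset.sum_congr rfl fun z _ => ?_
    rw [Finset.mul_sum]
    refine Finset.sum_congr rfl fun q hq => ?_
    simp only [Finset.mem_filter] at hq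
    rw [hq.2 s]
  refine ⟨⟨fun z _ => ⟨Finset.sum_nonneg fun q _ => (h01 q).1, ?_⟩,
      fiber_sum M h ρ ▸ hsum, fun s => ⟨?_, ?_⟩⟩, ?_⟩
  · calc _ ≤ ∑ q : Fin h → Fin M, ρ q :=
        Finset.sum_le_sum_of_subset_of_nonneg (Finset.filter_subset _ _)
          (fun q _ _ => (h01 q).1)
    _ = 1 := hsum
  · rw [key s]; exact (hcons s).1
  · rw [key s]; exact (hcons s).2
  · rw [← fiber_sum M h (fun q => γ q * ρ q)]
    refine Finset.sum_le_sum fun z _ => ?_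
    rw [Finset.mul_sum]
    refine Finset.sum_le_sum fun q hq => ?_
    simp only [Finset.mem_filter] at hq
    refine mul_le_mul_of_nonneg_right ?_ (h01 q).1
    exact le_csSup (((Set.toFinite _).image γ).bddAbove) ⟨q, hq.2, rfl⟩
  
end
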